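/- Let S ⊆ {-1,0,1}² be a step set with nonnegative weights p_{u,v} summing to 1, and let (H_m^k)_{m,k≥1} be a family of functions ℤ² → ℝ satisfying Dirichlet boundary conditions such that: (1) each H_1^k is discrete harmonic and every discrete harmonic function h admits a real sequence (a_k)_{k≥1} with h(i,j) = Σ_{k≥1} a_k H_1^k(i,j) for all (i,j); (2) Δ H_{m+1}^k = H_m^k for all m,k ≥ 1; (3) for every point (i,j) and every m ≥ 1, one has H_m^k(i,j) = 0 for all but finitely many k (so all the sums above are finite at each point and Δ may be applied term by term). Then for every n ≥ 1 and every discrete polyharmonic function h of order n (Δⁿh = 0, Dirichlet boundary conditions), there exist real coefficients a_{m,k} for 1 ≤ m ≤ n and k ≥ 1 such that h(i,j) = Σ_{m=1}^{n} Σ_{k≥1} a_{m,k} H_m^k(i,j) for all (i,j). -/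

import Mathlib

open Finset

/-- The discrete Laplacian associated with weights `p` on the step set `{-1,0,1}²`:
`(Δh)(i,j) = Σ_{(u,v)} p u v · h(i+u, j+v) − h(i,j)` for `i,j ≥ 0`, and `0` otherwise. -/
noncomputable def dLap (p : ℤ → ℤ → ℝ) (h : ℤ → ℤ → ℝ) : ℤ → ℤ → ℝ :=
  fun i j =>
    if 0 ≤ i ∧ 0 ≤ j then
      (∑ u ∈ ({-1, 0, 1} : Finset ℤ), ∑ v ∈ ({-1, 0, 1} : Finset ℤ),
        p u v * h (i + u) (j + v)) - h i j
    else 0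

/-
The proof is by induction on `n`. If `Δⁿ⁺¹h = 0`, then `Δh` is polyharmonic of order `n`, so
`Δh = Σ_{m ≤ n} Σ_k a_{m,k} H_m^k` by induction. Since `Δ` acts term by term and shifts the family
(`Δ H_{m+1}^k = H_m^k`), the function `g = h - Σ_{m ≤ n} Σ_k a_{m,k} H_{m+1}^k` is harmonic with
Dirichlet boundary conditions, hence a series in the `H_1^k`; this gives the expansion of `h`.
-/

namespace DiscreteLaplacian

variable (p : ℤ → ℤ → ℝ)

noncomputable def dLapₗ : (ℤ → ℤ → ℝ) →ₗ[ℝ] (ℤ → ℤ → ℝ) where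
  toFun := dLap p
  map_add' f g := by
    funext i j
    simp only [dLap, Pi.add_apply, mul_add, Finset.sum_add_distrib]
    split_ifs <;> ring
  map_smul' c f := by
    funext i j
    simp only [dLap, Pi.smul_apply, smul_eq_mul, RingHom.id_apply]
    split_ifs
    · simp only [mul_sub, Finset.mul_sum, mul_left_comm c]
    · rw [mul_zero]

def dirichlet : Submodule ℝ (ℤ → ℤ → ℝ) where
  carrier := {g | ∀ i j : ℤ, i < 0 ∨ j < 0 → g i j = 0}
  add_mem' hf hg i j hij := by simp [hf i j hij, hg i j hij]
  zero_mem' _ _ _ := rfl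
  smul_mem' c _ hf i j hij := by simp [hf i j hij]

theorem dLap_mem_dirichlet (g : ℤ → ℤ → ℝ) : dLap p g ∈ dirichlet := by
  intro i j hij
  have : ¬(0 ≤ i ∧ 0 ≤ j) := by omega
  simp [dLap, this]

theorem dLap_tsum {ι : Type*} (f : ι → ℤ → ℤ → ℝ) (hf : ∀ i j, Summable fun k => f k i j) :
    dLap p (fun i j => ∑' k, f k i j) = fun i j => ∑' k, dLap p (f k) i j := by
  funext i j
  simp only [dLap]
  split_ifs
  · have hneighbours : Summable fun k =>
        ∑ u ∈ ({-1, 0, 1} : Finset ℤ), ∑ v ∈ ({-1, 0, 1} : Finset ℤ),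
          p u v * f k (i + u) (j + v) :=
      summable_sum fun u _ => summable_sum fun v _ => (hf _ _).mul_left _
    rw [hneighbours.tsum_sub (hf i j), Summable.tsum_finsetSum fun u _ =>
      summable_sum fun v _ => (hf _ _).mul_left _]
    congr 1
    refine Finset.sum_congr rfl fun u _ => ?_
    rw [Summable.tsum_finsetSum fun v _ => (hf _ _).mul_left _]
    exact Finset.sum_congr rfl fun v _ => (tsum_mul_left).symm
  · simp

theorem dLap_sub (f g : ℤ → ℤ → ℝ) : dLap p (f - g) = dLap p f - dLap p g :=
  (dLapₗ p).map_sub f g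

theorem dLap_smul (c : ℝ) (f : ℤ → ℤ → ℝ) : dLap p (c • f) = c • dLap p f :=
  (dLapₗ p).map_smul c f

theorem dLap_sum {ι : Type*} (s : Finset ι) (f : ι → ℤ → ℤ → ℝ) :
    dLap p (∑ m ∈ s, f m) = ∑ m ∈ s, dLap p (f m) :=
  map_sum (dLapₗ p) f s

noncomputable def familySum (H : ℕ → ℕ → ℤ → ℤ → ℝ) (m : ℕ) (c : ℕ → ℝ) : ℤ → ℤ → ℝ :=
  fun i j => ∑' k, c k * H m (k + 1) i j

variable {H : ℕ → ℕ → ℤ → ℤ → ℝ} {m : ℕ}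

theorem summable_familySum_terms {i j : ℤ} (hfin : {k | 1 ≤ k ∧ H m k i j ≠ 0}.Finite)
    (c : ℕ → ℝ) : Summable fun k => c k * H m (k + 1) i j := by
  refine summable_of_hasFiniteSupport ((hfin.preimage (add_left_injective 1).injOn).subset ?_)
  intro k hk
  exact ⟨Nat.le_add_left 1 k, right_ne_zero_of_mul hk⟩

theorem familySum_mem_dirichlet (hdir : ∀ k, 1 ≤ k → H m k ∈ dirichlet) (c : ℕ → ℝ) :
    familySum H m c ∈ dirichlet := by
  intro i j hij
  simp [familySum, hdir _ (Nat.le_add_left 1 _) i j hij]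

theorem dLap_familySum_succ (hfin : ∀ i j, {k | 1 ≤ k ∧ H (m + 1) k i j ≠ 0}.Finite)
    (hchain : ∀ k, 1 ≤ k → dLap p (H (m + 1) k) = H m k) (c : ℕ → ℝ) :
    dLap p (familySum H (m + 1) c) = familySum H m c := by
  unfold familySum
  rw [dLap_tsum p _ fun i j => summable_familySum_terms (hfin i j) c]
  funext i j
  refine tsum_congr fun k => ?_
  rw [show (fun i j => c k * H (m + 1) (k + 1) i j) = c k • H (m + 1) (k + 1) from rfl,
    dLap_smul, hchain _ (Nat.le_add_left 1 k)]
  rfl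

theorem exists_eq_sum_familySum_of_polyharmonic
    (hdir : ∀ m k, 1 ≤ m → 1 ≤ k → H m k ∈ dirichlet)
    (hbasis : ∀ g ∈ dirichlet, dLap p g = 0 → ∃ a, g = familySum H 1 a)
    (hchain : ∀ m k, 1 ≤ m → 1 ≤ k → dLap p (H (m + 1) k) = H m k)
    (hfin : ∀ m, 1 ≤ m → ∀ i j, {k | 1 ≤ k ∧ H m k i j ≠ 0}.Finite)
    (n : ℕ) {h : ℤ → ℤ → ℝ} (hh : h ∈ dirichlet) (hpoly : (dLap p)^[n] h = 0) :
    ∃ a : ℕ → ℕ → ℝ, h = ∑ m ∈ range n, familySum H (m + 1) (a m) := by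
  induction n generalizing h with
  | zero => exact ⟨0, by simpa using hpoly⟩
  | succ n ih =>
    obtain ⟨a, ha⟩ := ih (dLap_mem_dirichlet p h) (by rwa [← Function.iterate_succ_apply])
    set s := ∑ m ∈ range n, familySum H (m + 2) (a m)
    have hs_mem : s ∈ dirichlet :=
      sum_mem fun m _ => familySum_mem_dirichlet (hdir (m + 2) · (by omega)) (a m)
    have hs_lap : dLap p s = dLap p h := by
      rw [ha, dLap_sum]
      exact Finset.sum_congr rfl fun m _ =>
        dLap_familySum_succ p (hfin (m + 2) (by omega)) (hchain (m + 1) · (by omega) ·) (a m)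
    obtain ⟨b, hb⟩ := hbasis (h - s) (sub_mem hh hs_mem) (by rw [dLap_sub, hs_lap, sub_self])
    refine ⟨fun m => Nat.casesOn m b a, ?_⟩
    rw [Finset.sum_range_succ', ← sub_eq_iff_eq_add']
    exact hb

end DiscreteLaplacian

open DiscreteLaplacian in
theorem all_polyharmonic_from_family
    (p : ℤ → ℤ → ℝ)
    (H : ℕ → ℕ → (ℤ → ℤ → ℝ))
    (hHdir : ∀ m k : ℕ, 1 ≤ m → 1 ≤ k → ∀ i j : ℤ, i < 0 ∨ j < 0 → H m k i j = 0)
    (hH1basis : ∀ g : ℤ → ℤ → ℝ, (∀ i j : ℤ, i < 0 ∨ j < 0 → g i j = 0) →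
      dLap p g = 0 →
      ∃ a : ℕ → ℝ, ∀ i j : ℤ, g i j = ∑' k : ℕ, a k * H 1 (k + 1) i j)
    (hchain : ∀ m k : ℕ, 1 ≤ m → 1 ≤ k → dLap p (H (m + 1) k) = H m k)
    (hfin : ∀ m : ℕ, 1 ≤ m → ∀ i j : ℤ, {k : ℕ | 1 ≤ k ∧ H m k i j ≠ 0}.Finite)
    (n : ℕ)
    (h : ℤ → ℤ → ℝ) (hdir : ∀ i j : ℤ, i < 0 ∨ j < 0 → h i j = 0)
    (hpoly : (dLap p)^[n] h = 0) :
    ∃ a : ℕ → ℕ → ℝ, ∀ i j : ℤ,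
      h i j = ∑ m ∈ Finset.Icc 1 n, ∑' k : ℕ, a m k * H m (k + 1) i j := by
  have hbasis : ∀ g ∈ dirichlet, dLap p g = 0 → ∃ a, g = familySum H 1 a := fun g hg hharm =>
    (hH1basis g hg hharm).imp fun a ha => funext fun i => funext (ha i)
  obtain ⟨a, rfl⟩ := exists_eq_sum_familySum_of_polyharmonic p hHdir hbasis hchain hfin n hdir hpoly
  refine ⟨fun m => a (m - 1), fun i j => ?_⟩
  rw [← Finset.Ico_add_one_right_eq_Icc, Finset.sum_Ico_eq_sum_range]
  simp [familySum, add_comm]
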